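/- arXiv:1707.03788 — 2 statements merged into one kernel-verified Lean document; each statement's English description precedes it below -/
import Mathlib

section
/- Let $2 \leq a_1 \leq \cdots \leq a_r$ be integers. There exists a constant $C>0$ such that every $r$-uniform hypergraph $G$ with $n$ vertices and $m \geq C n^{r - 1/(a_1\cdots a_{r-1})}$ edges contains at least $\Omega(m^{a_1\cdots a_r} n^{a_1+\cdots+a_r - r\cdot a_1\cdots a_r})$ copies of the complete $r$-partite $r$-graph $K^{(r)}_{a_1,\ldots,a_r}$. -/
open Real Finset

/-- `A : Fin r → Finset V` is a copy of the complete `r`-partite `r`-graph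
`K^{(r)}_{a 0, …, a (r-1)}` in the `r`-uniform hypergraph `G`: the classes `A i`
have sizes `a i`, are pairwise disjoint, and every `r`-set with exactly one vertex
in each class is an edge of `G`. -/
def IsCompleteMultipartiteCopy {V : Type*} [DecidableEq V] (G : Finset (Finset V))
    {r : ℕ} (a : Fin r → ℕ) (A : Fin r → Finset V) : Prop :=
  (∀ i, (A i).card = a i) ∧
  (∀ i j, i ≠ j → Disjoint (A i) (A j)) ∧
  (∀ f : Fin r → V, (∀ i, f i ∈ A i) → Finset.image f Finset.univ ∈ G)

/-!
Induction on `r`, through links. Write `n` for the number of vertices, `p = m / n ^ (r + 1)` for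
the edge density of an `(r + 1)`-graph `G`, `P = a₁ ⋯ a_r`, `S = a₁ + ⋯ + a_r` and `k = a_{r+1}`.
Vertices whose link (an `r`-graph) has density below the threshold of the induction hypothesis
carry at most half of the total link density, so the induction hypothesis and the power mean
inequality give `≳ n ^ (S + 1) p ^ P` pairs `(v, B)` with `B` a copy of `K_{a₁,…,a_r}` in the
link of `v`, i.e. with `v` a common extension of `B`. There are at most `n ^ S` families `B`;
adding `k` common extensions of `B` as the last class gives a copy of `K_{a₁,…,a_{r+1}}`, and
convexity of `x ↦ x.choose k` gives `≳ n ^ (S + k) p ^ (P k)` copies. The threshold on `m` is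
exactly what makes the average number of common extensions at least `2 k`, which is needed for
the convexity bound. The induction starts at `r = 0`, where the only copy is the empty family.
-/

section Analytic

variable {ι : Type*} {s : Finset ι}

theorem sum_sub_card_mul_le_sum_filter (f : ι → ℝ) {T : ℝ} (hT : 0 ≤ T) :
    ∑ i ∈ s, f i - #s * T ≤ ∑ i ∈ s with T ≤ f i, f i := by
  have hlow : ∑ i ∈ s with ¬T ≤ f i, f i ≤ #s * T :=
    calc ∑ i ∈ s with ¬T ≤ f i, f i ≤ ∑ i ∈ s with ¬T ≤ f i, T :=
          sum_le_sum fun i hi => (not_le.1 (mem_filter.1 hi).2).le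
      _ = #{i ∈ s | ¬T ≤ f i} * T := by rw [sum_const, nsmul_eq_mul]
      _ ≤ #s * T := by gcongr; exact filter_subset _ _
  linarith [sum_filter_add_sum_filter_not s (fun i => T ≤ f i) f]

theorem Nat.sub_pow_le_pow_mul_choose (d k : ℕ) : (d + 1 - k) ^ k ≤ k ^ k * d.choose k :=
  calc (d + 1 - k) ^ k ≤ d.descFactorial k := d.pow_sub_le_descFactorial k
    _ = k.factorial * d.choose k := d.descFactorial_eq_factorial_mul_choose k
    _ ≤ k ^ k * d.choose k := Nat.mul_le_mul_right _ k.factorial_le_pow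

theorem mul_pow_le_sum_pow_of_card_le {f : ι → ℝ} (hf : ∀ i ∈ s, 0 ≤ f i) {N q : ℝ}
    (hN : (#s : ℝ) ≤ N) (hq : 0 ≤ q) (hsum : N * q ≤ ∑ i ∈ s, f i) {k : ℕ} (hk : 1 ≤ k) :
    N * q ^ k ≤ ∑ i ∈ s, f i ^ k := by
  obtain ⟨j, rfl⟩ : ∃ j, k = j + 1 := ⟨k - 1, by omega⟩
  obtain hN0 | hN0 := ((Nat.cast_nonneg _).trans hN).eq_or_lt
  · rw [← hN0, zero_mul]
    exact sum_nonneg fun i hi => pow_nonneg (hf i hi) _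
  refine le_of_mul_le_mul_left ?_ (pow_pos hN0 j)
  calc N ^ j * (N * q ^ (j + 1)) = (N * q) ^ (j + 1) := by ring
    _ ≤ (∑ i ∈ s, f i) ^ (j + 1) := by gcongr
    _ ≤ (#s : ℝ) ^ j * ∑ i ∈ s, f i ^ (j + 1) := pow_sum_le_card_mul_sum_pow hf j
    _ ≤ N ^ j * ∑ i ∈ s, f i ^ (j + 1) := by
        gcongr
        exact sum_nonneg fun i hi => pow_nonneg (hf i hi) _

theorem mul_div_pow_le_sum_choose (d : ι → ℕ) {k : ℕ} (hk : 1 ≤ k) {N q : ℝ}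
    (hN : (#s : ℝ) ≤ N) (hq : 2 * k ≤ q) (hd : N * q ≤ ∑ i ∈ s, (d i : ℝ)) :
    N * (q / (2 * k)) ^ k ≤ ∑ i ∈ s, ((d i).choose k : ℝ) := by
  set y : ι → ℝ := fun i => ((d i + 1 - k : ℕ) : ℝ)
  have hy : ∀ i, (d i : ℝ) - k ≤ y i := fun i => by
    have h : (d i : ℝ) ≤ ((d i + 1 - k : ℕ) : ℝ) + k := by
      exact_mod_cast (by omega : d i ≤ d i + 1 - k + k)
    simp only [y]
    linarith
  have hsum : N * (q / 2) ≤ ∑ i ∈ s, y i := by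
    have := sum_le_sum fun i (_ : i ∈ s) => hy i
    rw [sum_sub_distrib, sum_const, nsmul_eq_mul] at this
    nlinarith
  calc N * (q / (2 * k)) ^ k = (N * (q / 2) ^ k) / (k : ℝ) ^ k := by
        rw [div_pow, div_pow, mul_pow, mul_div_assoc, div_div]
    _ ≤ (∑ i ∈ s, y i ^ k) / (k : ℝ) ^ k := by
        gcongr
        exact mul_pow_le_sum_pow_of_card_le (fun i _ => Nat.cast_nonneg _) hN (by linarith)
          hsum hk
    _ ≤ ∑ i ∈ s, ((d i).choose k : ℝ) := by
        rw [div_le_iff₀ (by positivity), sum_mul]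
        refine sum_le_sum fun i _ => ?_
        rw [mul_comm]
        simp only [y]
        exact_mod_cast Nat.sub_pow_le_pow_mul_choose (d i) k

end Analytic

section RealPowers

variable {N : ℝ}

theorem mul_rpow_natCast_sub_le_iff (hN : 0 < N) (r : ℕ) (C x y : ℝ) :
    C * N ^ ((r : ℝ) - x) ≤ y ↔ C * N ^ (-x) ≤ y / N ^ r := by
  rw [sub_eq_add_neg, rpow_add hN, rpow_natCast, le_div_iff₀ (by positivity),
    mul_left_comm, mul_comm]

theorem pow_mul_rpow_natCast_sub (hN : 0 < N) (y : ℝ) (r S P : ℕ) :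
    y ^ P * N ^ ((S : ℝ) - r * P) = N ^ S * (y / N ^ r) ^ P := by
  rw [rpow_sub hN, ← Nat.cast_mul, rpow_natCast, rpow_natCast, div_pow, ← pow_mul]
  field_simp

theorem pow_le_mul_pow_of_mul_rpow_le (hN : 0 < N) {P : ℕ} (hP : P ≠ 0) {C p : ℝ} (hC : 0 ≤ C)
    (h : C * N ^ (-(1 / (P : ℝ))) ≤ p) : C ^ P ≤ N * p ^ P := by
  have hpow : (N ^ (-(1 / (P : ℝ)))) ^ P = N⁻¹ := by
    rw [← rpow_natCast, ← rpow_mul hN.le, neg_mul, one_div_mul_cancel (by exact_mod_cast hP),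
      rpow_neg_one]
  calc C ^ P = N * (C * N ^ (-(1 / (P : ℝ)))) ^ P := by rw [mul_pow, hpow]; field_simp
    _ ≤ N * p ^ P := by gcongr

end RealPowers

theorem Fin.image_univ_eq_insert_last {α : Type*} [DecidableEq α] {r : ℕ} (f : Fin (r + 1) → α) :
    image f univ = insert (f (Fin.last r)) (image (Fin.init f) univ) := by
  rw [Fin.univ_castSuccEmb, cons_eq_insert, image_insert, map_eq_image, image_image]
  rfl

namespace Supersaturation

section Counting

variable {V : Type*} [DecidableEq V] {r : ℕ} {G : Finset (Finset V)}

def link (G : Finset (Finset V)) (v : V) : Finset (Finset V) :=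
  {e ∈ G | v ∈ e}.image (·.erase v)

theorem card_link (G : Finset (Finset V)) (v : V) : #(link G v) = #{e ∈ G | v ∈ e} :=
  card_image_of_injOn fun e he f hf hef => by
    rw [← insert_erase (mem_filter.1 he).2, ← insert_erase (mem_filter.1 hf).2]
    exact congrArg (insert v) hef

theorem card_of_mem_link (hG : ∀ e ∈ G, #e = r + 1) {v : V} {e : Finset V}
    (he : e ∈ link G v) : #e = r := by
  obtain ⟨f, hf, rfl⟩ := mem_image.1 he
  rw [card_erase_of_mem (mem_filter.1 hf).2, hG f (mem_filter.1 hf).1, Nat.add_sub_cancel]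

variable [Fintype V]

theorem sum_card_link (hG : ∀ e ∈ G, #e = r) : ∑ v, #(link G v) = r * #G := by
  simp_rw [card_link, card_eq_sum_ones, sum_filter]
  rw [sum_comm, mul_sum]
  exact sum_congr rfl fun e he => by simp [← hG e he]

theorem le_sum_filter_card_link_div (hG : ∀ e ∈ G, #e = r + 1)
    (hN : 0 < (Fintype.card V : ℝ)) {T : ℝ} (hT : 0 ≤ T)
    (hTp : T ≤ #G / (Fintype.card V : ℝ) ^ (r + 1) / 2) :
    Fintype.card V * (#G / (Fintype.card V : ℝ) ^ (r + 1) / 2) ≤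
      ∑ v with T ≤ #(link G v) / (Fintype.card V : ℝ) ^ r,
        #(link G v) / (Fintype.card V : ℝ) ^ r := by
  set N : ℝ := (Fintype.card V : ℝ)
  set p := #G / N ^ (r + 1)
  have hsum : ∑ v, (#(link G v) / N ^ r : ℝ) = (r + 1) * (N * p) := by
    rw [← sum_div, ← Nat.cast_sum, sum_card_link hG]
    simp only [p]
    field_simp
    push_cast
    ring
  have := sum_sub_card_mul_le_sum_filter (s := univ) (fun v => (#(link G v) / N ^ r : ℝ)) hT
  rw [card_univ, hsum] at this
  have : N * T ≤ N * (p / 2) := by gcongr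
  have : 0 ≤ (r : ℝ) * (N * p) := by positivity
  linarith

def commonExtensions (G : Finset (Finset V)) (B : Fin r → Finset V) : Finset V :=
  {v | ∀ g : Fin r → V, (∀ i, g i ∈ B i) → insert v (image g univ) ∈ G}

def disjointFamilies (b : Fin r → ℕ) : Finset (Fin r → Finset V) :=
  {B | (∀ i, #(B i) = b i) ∧ ∀ i j, i ≠ j → Disjoint (B i) (B j)}

theorem mem_commonExtensions {B : Fin r → Finset V} {v : V} :
    v ∈ commonExtensions G B ↔ ∀ g : Fin r → V, (∀ i, g i ∈ B i) → insert v (image g univ) ∈ G := by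
  simp [commonExtensions]

theorem mem_disjointFamilies {b : Fin r → ℕ} {B : Fin r → Finset V} :
    B ∈ disjointFamilies b ↔ (∀ i, #(B i) = b i) ∧ ∀ i j, i ≠ j → Disjoint (B i) (B j) := by
  simp [disjointFamilies]

theorem notMem_of_mem_commonExtensions (hG : ∀ e ∈ G, #e = r + 1) {B : Fin r → Finset V}
    (hB : ∀ i, (B i).Nonempty) {v : V} (hv : v ∈ commonExtensions G B) (i : Fin r) :
    v ∉ B i := by
  intro hvi
  set g := Function.update (fun j => (hB j).choose) i v
  have hg : ∀ j, g j ∈ B j := fun j => by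
    by_cases hj : j = i
    · subst hj; simpa [g] using hvi
    · simpa [g, hj] using (hB j).choose_spec
  have hedge := hG _ (mem_commonExtensions.1 hv g hg)
  rw [insert_eq_of_mem (mem_image.2 ⟨i, mem_univ _, by simp [g]⟩)] at hedge
  have := card_image_le (s := univ) (f := g)
  simp only [card_univ, Fintype.card_fin] at this
  omega

theorem isCompleteMultipartiteCopy_link_iff (hG : ∀ e ∈ G, #e = r + 1) {b : Fin r → ℕ}
    (hb : ∀ i, 1 ≤ b i) {v : V} {B : Fin r → Finset V} :
    IsCompleteMultipartiteCopy (link G v) b B ↔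
      B ∈ disjointFamilies b ∧ v ∈ commonExtensions G B := by
  rw [IsCompleteMultipartiteCopy, mem_disjointFamilies, and_assoc]
  refine and_congr_right fun hcard => and_congr_right fun _ => ⟨fun hedge => ?_, fun hv g hg => ?_⟩
  · refine mem_commonExtensions.2 fun g hg => ?_
    obtain ⟨e, he, hev⟩ := mem_image.1 (hedge g hg)
    rw [← hev, insert_erase (mem_filter.1 he).2]
    exact (mem_filter.1 he).1
  · have hB : ∀ i, (B i).Nonempty := fun i => card_pos.1 ((hcard i).symm ▸ hb i)
    refine mem_image.2 ⟨_, mem_filter.2 ⟨mem_commonExtensions.1 hv g hg, mem_insert_self _ _⟩,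
      erase_insert fun hvg => ?_⟩
    obtain ⟨i, -, rfl⟩ := mem_image.1 hvg
    exact notMem_of_mem_commonExtensions hG hB hv i (hg i)

theorem sum_natCard_copies_link (hG : ∀ e ∈ G, #e = r + 1) {b : Fin r → ℕ} (hb : ∀ i, 1 ≤ b i) :
    ∑ v, Nat.card {B // IsCompleteMultipartiteCopy (link G v) b B} =
      ∑ B ∈ disjointFamilies b, #(commonExtensions G B) := by
  classical
  have := sum_card_bipartiteAbove_eq_sum_card_bipartiteBelow (s := disjointFamilies b)
    (t := univ) fun B v => v ∈ commonExtensions G B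
  simp only [bipartiteAbove, bipartiteBelow, filter_univ_mem] at this
  rw [this]
  refine sum_congr rfl fun v _ => ?_
  rw [Nat.card_eq_fintype_card, Fintype.card_subtype]
  congr 1
  ext B
  simp [isCompleteMultipartiteCopy_link_iff hG hb]

theorem isCompleteMultipartiteCopy_snoc (hG : ∀ e ∈ G, #e = r + 1) {a : Fin (r + 1) → ℕ}
    (ha : ∀ i, 1 ≤ a i) {B : Fin r → Finset V} (hB : B ∈ disjointFamilies (Fin.init a))
    {X : Finset V} (hX : X ⊆ commonExtensions G B) (hXcard : #X = a (Fin.last r)) :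
    IsCompleteMultipartiteCopy G a (Fin.snoc B X : Fin (r + 1) → Finset V) := by
  obtain ⟨hcard, hdisj⟩ := mem_disjointFamilies.1 hB
  have hBX : ∀ i, Disjoint (B i) X := fun i => disjoint_left.2 fun u hu huX =>
    notMem_of_mem_commonExtensions hG (fun j => card_pos.1 ((hcard j).symm ▸ ha _)) (hX huX) i hu
  refine ⟨fun i => ?_, fun i j hij => ?_, fun f hf => ?_⟩
  · rcases Fin.eq_castSucc_or_eq_last i with ⟨i, rfl⟩ | rfl
    · simpa [Fin.init] using hcard i
    · simpa using hXcard
  · rcases Fin.eq_castSucc_or_eq_last i with ⟨i, rfl⟩ | rfl <;>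
      rcases Fin.eq_castSucc_or_eq_last j with ⟨j, rfl⟩ | rfl
    · simpa using hdisj i j (by simpa using hij)
    · simpa using hBX i
    · simpa using (hBX j).symm
    · exact absurd rfl hij
  · rw [Fin.image_univ_eq_insert_last]
    exact mem_commonExtensions.1 (hX (by simpa using hf (Fin.last r))) _
      fun i => by simpa [Fin.init] using hf i.castSucc

theorem sum_choose_le_natCard_copies (hG : ∀ e ∈ G, #e = r + 1) {a : Fin (r + 1) → ℕ}
    (ha : ∀ i, 1 ≤ a i) :
    ∑ B ∈ disjointFamilies (Fin.init a), (#(commonExtensions G B)).choose (a (Fin.last r)) ≤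
      Nat.card {A // IsCompleteMultipartiteCopy G a A} := by
  classical
  rw [Nat.card_eq_fintype_card, Fintype.card_subtype]
  simp_rw [← card_powersetCard]
  rw [← card_sigma]
  refine card_le_card_of_injOn (fun p => Fin.snoc p.1 p.2) (fun p hp => ?_) (fun p _ q _ h => ?_)
  · obtain ⟨hB, hX⟩ := mem_sigma.1 hp
    obtain ⟨hXsub, hXcard⟩ := mem_powersetCard.1 hX
    exact mem_filter.2 ⟨mem_univ _, isCompleteMultipartiteCopy_snoc hG ha hB hXsub hXcard⟩
  · obtain ⟨h1, h2⟩ := Fin.snoc_injective2 h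
    exact Sigma.ext h1 (heq_of_eq h2)

theorem card_disjointFamilies_le (b : Fin r → ℕ) :
    #(disjointFamilies (V := V) b) ≤ Fintype.card V ^ ∑ i, b i :=
  calc #(disjointFamilies (V := V) b)
      ≤ #(Fintype.piFinset fun i => (univ : Finset V).powersetCard (b i)) :=
        card_le_card fun B hB => Fintype.mem_piFinset.2 fun i =>
          mem_powersetCard.2 ⟨subset_univ _, (mem_disjointFamilies.1 hB).1 i⟩
    _ = ∏ i, (Fintype.card V).choose (b i) := by simp [Fintype.card_piFinset]
    _ ≤ ∏ i, Fintype.card V ^ b i := prod_le_prod' fun i _ => Nat.choose_le_pow _ _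
    _ = Fintype.card V ^ ∑ i, b i := prod_pow_eq_pow_sum _ _ _

theorem mul_div_pow_le_natCard_copies (hG : ∀ e ∈ G, #e = r + 1) {a : Fin (r + 1) → ℕ}
    (ha : ∀ i, 1 ≤ a i) {q : ℝ} (hq : 2 * a (Fin.last r) ≤ q)
    (hext : (Fintype.card V : ℝ) ^ (∑ i, Fin.init a i) * q ≤
      ∑ B ∈ disjointFamilies (Fin.init a), (#(commonExtensions G B) : ℝ)) :
    (Fintype.card V : ℝ) ^ (∑ i, Fin.init a i) * (q / (2 * a (Fin.last r))) ^ a (Fin.last r) ≤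
      Nat.card {A // IsCompleteMultipartiteCopy G a A} :=
  calc _ ≤ ∑ B ∈ disjointFamilies (Fin.init a),
          ((#(commonExtensions G B)).choose (a (Fin.last r)) : ℝ) :=
        mul_div_pow_le_sum_choose _ (ha _)
          (by exact_mod_cast card_disjointFamilies_le (Fin.init a)) hq hext
    _ ≤ _ := by exact_mod_cast sum_choose_le_natCard_copies hG ha

end Counting

/-- `a₁ ⋯ a_{r-1}` in the paper's 1-based notation. -/
def thresholdProd {r : ℕ} (a : Fin r → ℕ) : ℝ :=
  ∏ i : Fin r, if (i : ℕ) < r - 1 then (a i : ℝ) else 1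

theorem thresholdProd_succ {r : ℕ} (a : Fin (r + 1) → ℕ) :
    thresholdProd a = ∏ i, (Fin.init a i : ℝ) := by
  rw [thresholdProd, Fin.prod_univ_castSucc]
  simp [Fin.init]

theorem thresholdProd_pos {r : ℕ} {b : Fin r → ℕ} (hb : ∀ i, 1 ≤ b i) : 0 < thresholdProd b :=
  prod_pos fun i _ => by split_ifs <;> simp [Nat.one_le_iff_ne_zero.1 (hb i), Nat.pos_of_ne_zero]

theorem thresholdProd_le_prod {r : ℕ} {b : Fin r → ℕ} (hb : ∀ i, 1 ≤ b i) :
    thresholdProd b ≤ ∏ i, (b i : ℝ) :=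
  prod_le_prod (fun i _ => by split_ifs <;> positivity) fun i _ => by
    split_ifs
    · rfl
    · exact_mod_cast hb i

def SupersaturationHolds (r : ℕ) (a : Fin r → ℕ) (C c : ℝ) : Prop :=
  ∀ (V : Type) [Fintype V] [DecidableEq V] (G : Finset (Finset V)), (∀ e ∈ G, #e = r) →
    C * (Fintype.card V : ℝ) ^ ((r : ℝ) - 1 / thresholdProd a) ≤ #G →
    c * (#G : ℝ) ^ (∏ i, a i) * (Fintype.card V : ℝ) ^ ((∑ i, (a i : ℝ)) - r * ∏ i, (a i : ℝ)) ≤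
      Nat.card {A : Fin r → Finset V // IsCompleteMultipartiteCopy G a A}

theorem supersaturationHolds_zero (a : Fin 0 → ℕ) : SupersaturationHolds 0 a 1 1 := by
  intro V _ _ G hG _
  obtain rfl | ⟨e, he⟩ := G.eq_empty_or_nonempty
  · simp
  have hcopy : IsCompleteMultipartiteCopy G a Fin.elim0 :=
    ⟨fun i => i.elim0, fun i => i.elim0, fun f _ => by simpa [card_eq_zero.1 (hG e he)] using he⟩
  have hG1 : #G ≤ 1 := card_le_one.2 fun e he f hf => by
    rw [card_eq_zero.1 (hG e he), card_eq_zero.1 (hG f hf)]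
  have : Nonempty {A : Fin 0 → Finset V // IsCompleteMultipartiteCopy G a A} := ⟨⟨_, hcopy⟩⟩
  simpa using hG1

theorem SupersaturationHolds.le_natCard_copies {r : ℕ} {a : Fin r → ℕ} {C c : ℝ}
    (h : SupersaturationHolds r a C c) {V : Type} [Fintype V] [DecidableEq V]
    {G : Finset (Finset V)} (hG : ∀ e ∈ G, #e = r) (hN : 0 < (Fintype.card V : ℝ))
    (hthr : C * (Fintype.card V : ℝ) ^ (-(1 / thresholdProd a)) ≤ #G / (Fintype.card V : ℝ) ^ r) :
    c * (Fintype.card V : ℝ) ^ (∑ i, a i) * (#G / (Fintype.card V : ℝ) ^ r) ^ ∏ i, a i ≤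
      Nat.card {A // IsCompleteMultipartiteCopy G a A} := by
  have hconv := pow_mul_rpow_natCast_sub hN (#G : ℝ) r (∑ i, a i) (∏ i, a i)
  push_cast at hconv
  simpa only [mul_assoc, hconv] using h V G hG ((mul_rpow_natCast_sub_le_iff hN r _ _ _).2 hthr)

theorem supersaturationHolds_of_le_natCard_copies {r : ℕ} (hr : r ≠ 0) {a : Fin r → ℕ}
    (ha : ∀ i, 1 ≤ a i) {C c : ℝ}
    (h : ∀ (V : Type) [Fintype V] [DecidableEq V] (G : Finset (Finset V)), (∀ e ∈ G, #e = r) →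
      1 ≤ (Fintype.card V : ℝ) →
      C * (Fintype.card V : ℝ) ^ (-(1 / thresholdProd a)) ≤ #G / (Fintype.card V : ℝ) ^ r →
      c * (Fintype.card V : ℝ) ^ (∑ i, a i) * (#G / (Fintype.card V : ℝ) ^ r) ^ ∏ i, a i ≤
        Nat.card {A // IsCompleteMultipartiteCopy G a A}) :
    SupersaturationHolds r a C c := by
  intro V _ _ G hG hthr
  obtain rfl | ⟨e, he⟩ := G.eq_empty_or_nonempty
  · simp [prod_ne_zero_iff.2 fun i _ => Nat.one_le_iff_ne_zero.1 (ha i)]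
  have hV : 1 ≤ (Fintype.card V : ℝ) := Nat.one_le_cast.2 <| Fintype.card_pos_iff.2
    ⟨(card_pos.1 (by rw [hG e he]; omega)).choose⟩
  have hN : 0 < (Fintype.card V : ℝ) := by linarith
  have hconv := pow_mul_rpow_natCast_sub hN (#G : ℝ) r (∑ i, a i) (∏ i, a i)
  push_cast at hconv
  rw [mul_assoc, hconv, ← mul_assoc]
  exact h V G hG hV ((mul_rpow_natCast_sub_le_iff hN r _ _ _).1 hthr)

theorem le_sum_card_commonExtensions {r : ℕ} {b : Fin r → ℕ} (hb : ∀ i, 1 ≤ b i) {C c : ℝ}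
    (hC : 0 ≤ C) (hc : 0 ≤ c) (h : SupersaturationHolds r b C c) {V : Type} [Fintype V]
    [DecidableEq V] {G : Finset (Finset V)} (hG : ∀ e ∈ G, #e = r + 1)
    (hV : 1 ≤ (Fintype.card V : ℝ))
    (hthr : 2 * C * (Fintype.card V : ℝ) ^ (-(1 / ∏ i, (b i : ℝ))) ≤
      #G / (Fintype.card V : ℝ) ^ (r + 1)) :
    (Fintype.card V : ℝ) ^ (∑ i, b i) *
        (c * Fintype.card V * (#G / (Fintype.card V : ℝ) ^ (r + 1) / 2) ^ ∏ i, b i) ≤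
      ∑ B ∈ disjointFamilies b, (#(commonExtensions G B) : ℝ) := by
  set N : ℝ := (Fintype.card V : ℝ)
  set p := #G / N ^ (r + 1)
  set P := ∏ i, b i
  have hN : 0 < N := by linarith
  set x : V → ℝ := fun v => #(link G v) / N ^ r
  set T := C * N ^ (-(1 / thresholdProd b))
  have hTp : T ≤ p / 2 := by
    have : N ^ (-(1 / thresholdProd b)) ≤ N ^ (-(1 / ∏ i, (b i : ℝ))) :=
      rpow_le_rpow_of_exponent_le hV (neg_le_neg (one_div_le_one_div_of_le
        (thresholdProd_pos hb) (thresholdProd_le_prod hb)))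
    nlinarith
  have hpow : N * (p / 2) ^ P ≤ ∑ v with T ≤ x v, x v ^ P :=
    mul_pow_le_sum_pow_of_card_le (fun v _ => by positivity)
      (by exact_mod_cast card_le_univ _) (by positivity)
      (le_sum_filter_card_link_div hG hN (by positivity) hTp)
      (Nat.one_le_iff_ne_zero.2 (prod_ne_zero_iff.2 fun i _ => Nat.one_le_iff_ne_zero.1 (hb i)))
  rw [← Nat.cast_sum, ← sum_natCard_copies_link hG hb, Nat.cast_sum]
  calc N ^ (∑ i, b i) * (c * N * (p / 2) ^ P) = c * N ^ (∑ i, b i) * (N * (p / 2) ^ P) := by ring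
    _ ≤ c * N ^ (∑ i, b i) * ∑ v with T ≤ x v, x v ^ P := by gcongr
    _ = ∑ v with T ≤ x v, c * N ^ (∑ i, b i) * x v ^ P := mul_sum _ _ _
    _ ≤ ∑ v with T ≤ x v, (Nat.card {B // IsCompleteMultipartiteCopy (link G v) b B} : ℝ) :=
        sum_le_sum fun v hv => h.le_natCard_copies (fun e he => card_of_mem_link hG he) hN
          (mem_filter.1 hv).2
    _ ≤ _ := sum_le_sum_of_subset_of_nonneg (filter_subset _ _) fun _ _ _ => Nat.cast_nonneg _

theorem exists_supersaturationHolds_succ {r : ℕ} {a : Fin (r + 1) → ℕ} (ha : ∀ i, 1 ≤ a i)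
    {C c : ℝ} (hC : 0 ≤ C) (hc : 0 < c) (h : SupersaturationHolds r (Fin.init a) C c) :
    ∃ C', 0 < C' ∧ ∃ c', 0 < c' ∧ SupersaturationHolds (r + 1) a C' c' := by
  set k := a (Fin.last r)
  set P := ∏ i, Fin.init a i
  set S := ∑ i, Fin.init a i
  have hk : 1 ≤ k := ha _
  have hP : P ≠ 0 := prod_ne_zero_iff.2 fun i _ => Nat.one_le_iff_ne_zero.1 (ha _)
  -- `2 C ≤ C₀` makes the light vertices negligible, `2 k ≤ c (C₀ / 2) ^ P` gives enough common
  -- extensions on average.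
  set C₀ := 2 * (1 + C + 2 * k / c)
  have hC₀ : 2 * C ≤ C₀ ∧ 1 ≤ C₀ / 2 ∧ 2 * k / c ≤ C₀ / 2 := by
    have : 0 ≤ 2 * (k : ℝ) / c := by positivity
    refine ⟨?_, ?_, ?_⟩ <;> linarith
  refine ⟨C₀, by positivity, (c / 2 ^ P / (2 * k)) ^ k, by positivity,
    supersaturationHolds_of_le_natCard_copies r.succ_ne_zero ha fun V _ _ G hG hV hp => ?_⟩
  set N : ℝ := (Fintype.card V : ℝ)
  set p := #G / N ^ (r + 1)
  have hN : 0 < N := by linarith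
  rw [thresholdProd_succ] at hp
  have hlink : N ^ S * (c * N * (p / 2) ^ P) ≤
      ∑ B ∈ disjointFamilies (Fin.init a), (#(commonExtensions G B) : ℝ) :=
    le_sum_card_commonExtensions (fun i => ha _) hC hc.le h hG hV
      ((mul_le_mul_of_nonneg_right hC₀.1 (by positivity)).trans hp)
  have hq : 2 * k ≤ c * N * (p / 2) ^ P := by
    have hdens := pow_le_mul_pow_of_mul_rpow_le hN hP (C := C₀ / 2) (p := p / 2) (by positivity)
      (by push_cast [P]; rw [div_mul_eq_mul_div]; linarith)
    calc 2 * (k : ℝ) = c * (2 * k / c) := by field_simp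
      _ ≤ c * (C₀ / 2) ^ P := by gcongr; exact hC₀.2.2.trans (le_self_pow₀ hC₀.2.1 hP)
      _ ≤ c * N * (p / 2) ^ P := by rw [mul_assoc]; gcongr
  rw [Fin.sum_univ_castSucc a, Fin.prod_univ_castSucc a]
  calc (c / 2 ^ P / (2 * k)) ^ k * N ^ (S + k) * p ^ (P * k)
        = N ^ S * (c * N * (p / 2) ^ P / (2 * k)) ^ k := by
          rw [div_pow p, pow_add, pow_mul]
          ring
    _ ≤ _ := mul_div_pow_le_natCard_copies hG ha hq hlink

theorem exists_supersaturationHolds (r : ℕ) (a : Fin r → ℕ) (ha : ∀ i, 1 ≤ a i) :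
    ∃ C, 0 < C ∧ ∃ c, 0 < c ∧ SupersaturationHolds r a C c := by
  induction r with
  | zero => exact ⟨1, one_pos, 1, one_pos, supersaturationHolds_zero a⟩
  | succ r ih =>
    obtain ⟨C, hC, c, hc, h⟩ := ih (Fin.init a) fun i => ha _
    exact exists_supersaturationHolds_succ ha hC.le hc h

end Supersaturation

theorem supersaturation_complete_multipartite_general (r : ℕ) (a : Fin r → ℕ)
    (ha2 : ∀ i, 2 ≤ a i) :
    ∃ C : ℝ, 0 < C ∧ ∃ c : ℝ, 0 < c ∧
      ∀ (n : ℕ) (V : Type) [Fintype V] [DecidableEq V] (G : Finset (Finset V)) (m : ℕ),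
        Fintype.card V = n →
        (∀ e ∈ G, e.card = r) →
        m = G.card →
        C * (n : ℝ) ^ ((r : ℝ) - 1 / (∏ i : Fin r, if (i : ℕ) < r - 1 then (a i : ℝ) else 1)) ≤ (m : ℝ) →
        c * (m : ℝ) ^ (∏ i : Fin r, a i) *
            (n : ℝ) ^ ((∑ i : Fin r, (a i : ℝ)) - r * ∏ i : Fin r, (a i : ℝ)) ≤
          (Nat.card {A : Fin r → Finset V // IsCompleteMultipartiteCopy G a A} : ℝ) := by
  obtain ⟨C, hC, c, hc, h⟩ :=
    Supersaturation.exists_supersaturationHolds r a fun i => one_le_two.trans (ha2 i)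
  refine ⟨C, hC, c, hc, fun n V _ _ G m hn hG hm hthr => ?_⟩
  subst hn hm
  exact h V G hG hthr

/-- Theorem 1.3: for `2 ≤ a 0 ≤ … ≤ a (r-1)` there is `C > 0` (and an
implied constant `c > 0`) such that every `r`-graph with `n` vertices and
`m ≥ C·n^{r - 1/(a_1⋯a_{r-1})}` edges contains at least
`c · m^{a_1⋯a_r} · n^{a_1+⋯+a_r - r·a_1⋯a_r}` copies of `K^{(r)}_{a_1,…,a_r}`. -/
theorem supersaturation_complete_multipartite (r : ℕ) (hr : 1 ≤ r) (a : Fin r → ℕ)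
    (ha2 : ∀ i, 2 ≤ a i) (hmono : Monotone a) :
    ∃ C : ℝ, 0 < C ∧ ∃ c : ℝ, 0 < c ∧
      ∀ (n : ℕ) (V : Type) [Fintype V] [DecidableEq V] (G : Finset (Finset V)) (m : ℕ),
        Fintype.card V = n →
        (∀ e ∈ G, e.card = r) →
        m = G.card →
        C * (n : ℝ) ^ ((r : ℝ) - 1 / (∏ i : Fin r, if (i : ℕ) < r - 1 then (a i : ℝ) else 1)) ≤ (m : ℝ) →
        c * (m : ℝ) ^ (∏ i : Fin r, a i) *
            (n : ℝ) ^ ((∑ i : Fin r, (a i : ℝ)) - r * ∏ i : Fin r, (a i : ℝ)) ≤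
          (Nat.card {A : Fin r → Finset V // IsCompleteMultipartiteCopy G a A} : ℝ) :=
  supersaturation_complete_multipartite_general r a ha2
end

section
/- Let $\mathcal{H}$ be an $s$-uniform hypergraph, let $\mathcal{F}$ be a family of subsets of $V(\mathcal{H})$ each of size at least $1$, and suppose every $\sigma \in \mathcal{F}$ satisfies $d_{\mathcal{H}}(\sigma) \geq D_{|\sigma|}$, where $d_{\mathcal{H}}(\sigma)$ is the number of hyperedges containing $\sigma$. Fix a nonempty set $\tau \subseteq V(\mathcal{H})$ with $d_{\mathcal{H}}(\tau) \leq \Delta$. Then for each $j \geq 1$, the number of sets $\sigma$ of size $j$ disjoint from $\tau$ with $\sigma \cup \tau \in \mathcal{F}$ is at most $2^{s}\Delta / D_{j+|\tau|}$. -/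
open Finset

/-- abstract double-counting core of the link bound. In an `s`-uniform
hypergraph `𝓗`, if every `σ ∈ 𝓕` has degree at least `D |σ|`, and `τ` is a nonempty set
with `d_𝓗(τ) ≤ Δ`, then for each `j ≥ 1` the number of `j`-sets `σ` disjoint from `τ`
with `σ ∪ τ ∈ 𝓕` is at most `2^s·Δ / D_{j+|τ|}`. -/
theorem link_double_counting {V : Type*} [DecidableEq V]
    (s : ℕ) (𝓗 : Finset (Finset V)) (huniform : ∀ e ∈ 𝓗, e.card = s)
    (𝓕 : Set (Finset V)) (D : ℕ → ℝ)
    (h𝓕ne : ∀ σ ∈ 𝓕, σ.Nonempty)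
    (hdeg : ∀ σ ∈ 𝓕, D σ.card ≤ ((𝓗.filter fun e => σ ⊆ e).card : ℝ))
    (τ : Finset V) (hτ : τ.Nonempty) (Δ : ℝ)
    (hΔ : ((𝓗.filter fun e => τ ⊆ e).card : ℝ) ≤ Δ)
    (j : ℕ) (hj : 1 ≤ j) (hDpos : 0 < D (j + τ.card)) :
    (Nat.card {σ : Finset V // σ.card = j ∧ Disjoint σ τ ∧ σ ∪ τ ∈ 𝓕} : ℝ) ≤
      2 ^ s * Δ / D (j + τ.card) := by
  classical
  set A : Set (Finset V) := {σ | σ.card = j ∧ Disjoint σ τ ∧ σ ∪ τ ∈ 𝓕} with hA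
  -- degree of σ ∪ τ is bounded below by D (j + τ.card) for σ ∈ A
  have hdegA : ∀ σ ∈ A, D (j + τ.card) ≤ ((𝓗.filter fun e => σ ∪ τ ⊆ e).card : ℝ) := by
    rintro σ ⟨hc, hd, hm⟩
    have := hdeg _ hm
    rwa [Finset.card_union_of_disjoint hd, hc] at this
  -- every σ ∈ A is contained in the union of all hyperedges
  have hsub : ∀ σ ∈ A, σ ∈ (𝓗.sup id).powerset := by
    intro σ hσ
    have h1 := hdegA σ hσ
    have hpos : 0 < ((𝓗.filter fun e => σ ∪ τ ⊆ e).card : ℝ) := lt_of_lt_of_le hDpos h1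
    have : (𝓗.filter fun e => σ ∪ τ ⊆ e).Nonempty := by
      rw [← Finset.card_pos]; exact_mod_cast hpos
    obtain ⟨e, he⟩ := this
    rw [Finset.mem_filter] at he
    rw [Finset.mem_powerset]
    exact (Finset.subset_union_left.trans he.2).trans (Finset.le_sup (f := id) he.1)
  have hfin : A.Finite := Set.Finite.subset (𝓗.sup id).powerset.finite_toSet hsub
  set F : Finset (Finset V) := hfin.toFinset with hF
  have hmemF : ∀ σ, σ ∈ F ↔ σ ∈ A := fun σ => hfin.mem_toFinset
  -- Nat.card = F.card
  have hcard : (Nat.card {σ : Finset V // σ.card = j ∧ Disjoint σ τ ∧ σ ∪ τ ∈ 𝓕}) = F.card := by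
    have : Nat.card {σ : Finset V // σ.card = j ∧ Disjoint σ τ ∧ σ ∪ τ ∈ 𝓕} = Nat.card A := rfl
    rw [this, Nat.card_coe_set_eq, Set.ncard_eq_toFinset_card A hfin]
  -- key counting in ℕ
  have key : F.card * 1 ≤ F.card ∧ True := ⟨le_of_eq (mul_one _), trivial⟩
  have swap :
      ∑ σ ∈ F, (𝓗.filter fun e => σ ∪ τ ⊆ e).card
        = ∑ e ∈ 𝓗, (F.filter fun σ => σ ∪ τ ⊆ e).card := by
    simp_rw [Finset.card_filter]
    rw [Finset.sum_comm]
  have inner : ∀ e ∈ 𝓗, (F.filter fun σ => σ ∪ τ ⊆ e).card ≤ if τ ⊆ e then 2 ^ s else 0 := by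
    intro e he
    by_cases hτe : τ ⊆ e
    · simp only [hτe, if_true]
      have hss : (F.filter fun σ => σ ∪ τ ⊆ e) ⊆ e.powerset := by
        intro σ hσ
        rw [Finset.mem_filter] at hσ
        rw [Finset.mem_powerset]
        exact Finset.subset_union_left.trans hσ.2
      calc (F.filter fun σ => σ ∪ τ ⊆ e).card ≤ e.powerset.card := Finset.card_le_card hss
        _ = 2 ^ s := by rw [Finset.card_powerset, huniform e he]
    · simp only [hτe, if_false]
      rw [Nat.le_zero, Finset.card_eq_zero, Finset.filter_eq_empty_iff]
      intro σ _ hcon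
      exact hτe (Finset.subset_union_right.trans hcon)
  have count : ∑ e ∈ 𝓗, (F.filter fun σ => σ ∪ τ ⊆ e).card
      ≤ 2 ^ s * (𝓗.filter fun e => τ ⊆ e).card := by
    calc ∑ e ∈ 𝓗, (F.filter fun σ => σ ∪ τ ⊆ e).card
        ≤ ∑ e ∈ 𝓗, if τ ⊆ e then 2 ^ s else 0 := Finset.sum_le_sum inner
      _ = ∑ e ∈ 𝓗.filter fun e => τ ⊆ e, 2 ^ s := by rw [Finset.sum_filter]
      _ = 2 ^ s * (𝓗.filter fun e => τ ⊆ e).card := by rw [Finset.sum_const, smul_eq_mul, mul_comm]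
  -- now real-valued chain
  have main : (F.card : ℝ) * D (j + τ.card) ≤ 2 ^ s * Δ := by
    have h1 : (F.card : ℝ) * D (j + τ.card)
        ≤ ∑ σ ∈ F, ((𝓗.filter fun e => σ ∪ τ ⊆ e).card : ℝ) := by
      calc (F.card : ℝ) * D (j + τ.card) = ∑ _σ ∈ F, D (j + τ.card) := by
            rw [Finset.sum_const, nsmul_eq_mul]
        _ ≤ _ := Finset.sum_le_sum fun σ hσ => hdegA σ ((hmemF σ).mp hσ)
    have h2 : ∑ σ ∈ F, ((𝓗.filter fun e => σ ∪ τ ⊆ e).card : ℝ)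
        ≤ 2 ^ s * ((𝓗.filter fun e => τ ⊆ e).card : ℝ) := by
      exact_mod_cast swap ▸ count
    have h3 : (2 : ℝ) ^ s * ((𝓗.filter fun e => τ ⊆ e).card : ℝ) ≤ 2 ^ s * Δ :=
      mul_le_mul_of_nonneg_left hΔ (by positivity)
    linarith
  rw [hcard, le_div_iff₀ hDpos]
  exact main
end
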